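/- Let g : ℝ → ℝ be C¹ and a < ū < b. Then for all u₁, u₂ ∈ [ū, b] with u₁ < u₂: (conv_{[ū,b]} g)'(u₂) − (conv_{[ū,b]} g)'(u₁) ≥ (conv_{[a,b]} g)'(u₂) − (conv_{[a,b]} g)'(u₁). (Derivatives at endpoints are one-sided.) -/

import Mathlib

/-!
Let `E = conv_[a,b] g` and let `w` be the first point of `[ū, b]` where `E` touches `g`
(there is one, since `E b = g b`). Off the contact set the envelope is affine: a tangent of `E`
that stayed strictly below `g` on the right could be tilted upwards and would still be a convex
minorant, contradicting the derivative. Hence `E'` is constant on `[ū, w]`. On `[w, b]` the two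
envelopes coincide: between consecutive contact points `E` is the chord of `g`, which bounds the
convex minorant `conv_[ū,b] g` from above. The inequality then follows from the monotonicity of
`(conv_[ū,b] g)'`.
-/

open Set

/-- The convex envelope of `g` on the interval `[a,b]`: the pointwise supremum of all
convex functions on `[a,b]` lying below `g` on `[a,b]`. -/
noncomputable def convEnv (a b : ℝ) (g : ℝ → ℝ) : ℝ → ℝ :=
  fun u => sSup {y : ℝ | ∃ h : ℝ → ℝ, ConvexOn ℝ (Set.Icc a b) h ∧
    (∀ x ∈ Set.Icc a b, h x ≤ g x) ∧ y = h u}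

open Filter Topology

lemma convexOn_line {s : Set ℝ} (hs : Convex ℝ s) (A B c : ℝ) :
    ConvexOn ℝ s (fun y => A + B * (y - c)) := by
  refine ⟨hs, fun x _ y _ p q _ _ hpq => le_of_eq ?_⟩
  simp only [smul_eq_mul]
  linear_combination (B * c - A) * hpq

lemma hasDerivAt_line (A B c x : ℝ) : HasDerivAt (fun y => A + B * (y - c)) B x := by
  simpa using (((hasDerivAt_id x).sub_const c).const_mul B).const_add A

lemma isCompact_Icc_sep_eq {f g : ℝ → ℝ} {c d : ℝ} (hf : ContinuousOn f (Icc c d))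
    (hg : ContinuousOn g (Icc c d)) : IsCompact {y ∈ Icc c d | f y = g y} :=
  isCompact_Icc.of_isClosed_subset (isClosed_Icc.isClosed_eq hf hg) (sep_subset _ _)

namespace HasDerivWithinAt

lemma eq_of_eqOn_Icc {f₁ f₂ : ℝ → ℝ} {d₁ d₂ x p q : ℝ} {s₁ s₂ : Set ℝ}
    (h₁ : HasDerivWithinAt f₁ d₁ s₁ x) (h₂ : HasDerivWithinAt f₂ d₂ s₂ x)
    (hpq : p < q) (hx : x ∈ Icc p q) (hs₁ : Icc p q ⊆ s₁) (hs₂ : Icc p q ⊆ s₂)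
    (heq : EqOn f₁ f₂ (Icc p q)) : d₁ = d₂ :=
  (uniqueDiffOn_Icc hpq x hx).eq_deriv _ (h₁.mono hs₁) ((h₂.mono hs₂).congr heq (heq hx))

lemma le_of_forall_le_slope {f : ℝ → ℝ} {f' k x b : ℝ} {s : Set ℝ}
    (hf : HasDerivWithinAt f f' s x) (hxb : x < b) (hs : Ioo x b ⊆ s)
    (hk : ∀ z ∈ Ioo x b, k ≤ slope f x z) : k ≤ f' := by
  have := left_nhdsWithin_Ioo_neBot hxb
  exact ge_of_tendsto ((hasDerivWithinAt_iff_tendsto_slope' fun h => lt_irrefl x h.1).1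
    (hf.mono hs)) (eventually_mem_nhdsWithin.mono hk)

end HasDerivWithinAt

namespace ConvexOn

variable {s : Set ℝ} {E : ℝ → ℝ} {x y z : ℝ}

lemma le_line_of_mem_Icc (hE : ConvexOn ℝ s E) (hx : x ∈ s) (hz : z ∈ s) (hy : y ∈ Icc x z)
    {A B c : ℝ} (hEx : E x ≤ A + B * (x - c)) (hEz : E z ≤ A + B * (z - c)) :
    E y ≤ A + B * (y - c) := by
  have hφ := (hE.add (convexOn_line hE.1 (-A) (-B) c)).le_on_segment hx hz
    (by rwa [segment_eq_Icc (hy.1.trans hy.2)])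
  simp only [Pi.add_apply] at hφ
  have hmax : max (E x + (-A + -B * (x - c))) (E z + (-A + -B * (z - c))) ≤ 0 :=
    max_le (by linarith) (by linarith)
  linarith

lemma line_le_of_hasDerivWithinAt (hE : ConvexOn ℝ s E) (hx : x ∈ s) (hy : y ∈ s) {m : ℝ}
    (hm : HasDerivWithinAt E m s x) : E x + m * (y - x) ≤ E y := by
  rcases lt_trichotomy x y with hxy | rfl | hyx
  · have := hE.le_slope_of_hasDerivWithinAt hx hy hxy hm
    rw [slope_def_field, le_div_iff₀ (sub_pos.2 hxy)] at this
    linarith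
  · simp
  · have := hE.slope_le_of_hasDerivWithinAt hy hx hyx hm
    rw [slope_def_field, div_le_iff₀ (sub_pos.2 hyx)] at this
    linarith

lemma monotoneOn_of_hasDerivWithinAt (hE : ConvexOn ℝ s E) {m : ℝ → ℝ}
    (hm : ∀ x ∈ s, HasDerivWithinAt E (m x) s x) : MonotoneOn m s := by
  intro x hx y hy hxy
  rcases hxy.eq_or_lt with rfl | hxy
  · rfl
  exact (hE.le_slope_of_hasDerivWithinAt hx hy hxy (hm x hx)).trans
    (hE.slope_le_of_hasDerivWithinAt hx hy hxy (hm y hy))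

end ConvexOn

section ConvexEnvelope

variable {g : ℝ → ℝ} {a b : ℝ}

lemma le_convEnv {h : ℝ → ℝ} (hh : ConvexOn ℝ (Icc a b) h) (hhg : ∀ x ∈ Icc a b, h x ≤ g x)
    {u : ℝ} (hu : u ∈ Icc a b) : h u ≤ convEnv a b g u :=
  le_csSup ⟨g u, by rintro _ ⟨h', _, hh'g, rfl⟩; exact hh'g u hu⟩ ⟨h, hh, hhg, rfl⟩

lemma convEnv_le_of_forall_minorant_le (hg : ContinuousOn g (Icc a b)) {u c : ℝ}
    (hc : ∀ h : ℝ → ℝ, ConvexOn ℝ (Icc a b) h → (∀ x ∈ Icc a b, h x ≤ g x) → h u ≤ c) :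
    convEnv a b g u ≤ c := by
  obtain ⟨M, hM⟩ := isCompact_Icc.bddBelow_image hg
  refine csSup_le ⟨M, fun _ => M, convexOn_const M (convex_Icc a b),
    fun x hx => hM ⟨x, hx, rfl⟩, rfl⟩ ?_
  rintro _ ⟨h, hh, hhg, rfl⟩
  exact hc h hh hhg

lemma convEnv_le (hg : ContinuousOn g (Icc a b)) {u : ℝ} (hu : u ∈ Icc a b) :
    convEnv a b g u ≤ g u :=
  convEnv_le_of_forall_minorant_le hg fun _ _ hhg => hhg u hu

lemma convexOn_convEnv (hg : ContinuousOn g (Icc a b)) : ConvexOn ℝ (Icc a b) (convEnv a b g) := by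
  refine ⟨convex_Icc a b, fun x hx y hy p q hp hq hpq => ?_⟩
  refine convEnv_le_of_forall_minorant_le hg fun h hh hhg => ?_
  calc h (p • x + q • y) ≤ p • h x + q • h y := hh.2 hx hy hp hq hpq
    _ ≤ p • convEnv a b g x + q • convEnv a b g y := by
      simp only [smul_eq_mul]
      gcongr
      exacts [le_convEnv hh hhg hx, le_convEnv hh hhg hy]

lemma convEnv_le_convEnv {a' b' : ℝ} (hg : ContinuousOn g (Icc a b))
    (hsub : Icc a' b' ⊆ Icc a b) {u : ℝ} (hu : u ∈ Icc a' b') :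
    convEnv a b g u ≤ convEnv a' b' g u :=
  convEnv_le_of_forall_minorant_le hg fun _ hh hhg =>
    le_convEnv (hh.subset hsub (convex_Icc _ _)) (fun x hx => hhg x (hsub hx)) hu

lemma convEnv_right_eq (hab : a ≤ b) (hg : ContinuousOn g (Icc a b)) :
    convEnv a b g b = g b := by
  have hb : b ∈ Icc a b := right_mem_Icc.2 hab
  refine le_antisymm (convEnv_le hg hb) (le_of_forall_sub_le fun ε hε => ?_)
  obtain ⟨M, hM⟩ := isCompact_Icc.bddBelow_image hg
  obtain ⟨δ, hδ, hclose⟩ := Metric.continuousWithinAt_iff.1 (hg b hb) ε hε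
  -- a line through `(b, g b - ε)`, steep enough to pass below `M` at distance `δ` from `b`
  set K := |g b - ε - M| / δ
  have hK : 0 ≤ K := by positivity
  have hline : ∀ x ∈ Icc a b, g b - ε + K * (x - b) ≤ g x := by
    intro x hx
    rcases lt_or_ge (b - x) δ with hxb | hxb
    · have hgx := hclose hx
        (by rwa [Real.dist_eq, abs_sub_comm, abs_of_nonneg (by linarith [hx.2])])
      rw [Real.dist_eq, abs_lt] at hgx
      nlinarith [hx.2]
    · have hKδ : K * δ = |g b - ε - M| := div_mul_cancel₀ _ hδ.ne'
      nlinarith [hM ⟨x, hx, rfl⟩, le_abs_self (g b - ε - M)]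
  simpa using le_convEnv (convexOn_line (convex_Icc a b) (g b - ε) K b) hline hb

lemma exists_eq_convEnv_tangent (hg : ContinuousOn g (Icc a b)) {x m : ℝ} (hx : x ∈ Ico a b)
    (hm : HasDerivWithinAt (convEnv a b g) m (Icc a b) x) :
    ∃ z ∈ Icc x b, g z = convEnv a b g x + m * (z - x) := by
  set E := convEnv a b g
  have hxab : x ∈ Icc a b := Ico_subset_Icc_self hx
  have hsub : Icc x b ⊆ Icc a b := Icc_subset_Icc_left hx.1
  have htan : ∀ y ∈ Icc a b, E x + m * (y - x) ≤ g y := fun y hy =>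
    ((convexOn_convEnv hg).line_le_of_hasDerivWithinAt hxab hy hm).trans (convEnv_le hg hy)
  by_contra! hne
  -- the gap between `g` and the tangent has a positive minimum `c` on `[x, b]`,
  -- which leaves room to tilt the tangent upwards
  obtain ⟨z₀, hz₀, hmin⟩ := isCompact_Icc.exists_isMinOn (nonempty_Icc.2 hx.2.le)
    ((hg.mono hsub).sub (by fun_prop : ContinuousOn (fun y => E x + m * (y - x)) (Icc x b)))
  set c := g z₀ - (E x + m * (z₀ - x))
  have hc : 0 < c := sub_pos.2 ((htan z₀ (hsub hz₀)).lt_of_ne (hne z₀ hz₀).symm)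
  set θ := c / (b - x)
  have hθ : 0 < θ := div_pos hc (sub_pos.2 hx.2)
  have htilt : ∀ y ∈ Icc a b, E x + (m + θ) * (y - x) ≤ g y := by
    intro y hy
    rcases le_or_gt y x with hyx | hxy
    · nlinarith [htan y hy]
    · have hθc : θ * (b - x) = c := div_mul_cancel₀ _ (sub_pos.2 hx.2).ne'
      have hcy : c ≤ g y - (E x + m * (y - x)) := hmin ⟨hxy.le, hy.2⟩
      nlinarith [hy.2]
  have : m + θ ≤ m := hm.le_of_forall_le_slope hx.2 (Ioo_subset_Icc_self.trans hsub) fun z hz => by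
    have := le_convEnv (convexOn_line (convex_Icc a b) (E x) (m + θ) x) htilt
      (hsub (Ioo_subset_Icc_self hz))
    rw [slope_def_field, le_div_iff₀ (sub_pos.2 hz.1)]
    linarith
  linarith

lemma convEnv_eq_tangent_of_lt (hg : ContinuousOn g (Icc a b)) {x q m : ℝ} (hx : x ∈ Ico a b)
    (hm : HasDerivWithinAt (convEnv a b g) m (Icc a b) x) (hqb : q ≤ b)
    (hlt : ∀ y ∈ Ico x q, convEnv a b g y < g y) :
    ∀ y ∈ Icc x q, convEnv a b g y = convEnv a b g x + m * (y - x) := by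
  have hE := convexOn_convEnv hg
  have hxab : x ∈ Icc a b := Ico_subset_Icc_self hx
  obtain ⟨z, hz, hgz⟩ := exists_eq_convEnv_tangent hg hx hm
  have hzab : z ∈ Icc a b := ⟨hx.1.trans hz.1, hz.2⟩
  have hEz : convEnv a b g z ≤ convEnv a b g x + m * (z - x) := hgz ▸ convEnv_le hg hzab
  have hqz : q ≤ z := not_lt.1 fun hzq => (hlt z ⟨hz.1, hzq⟩).not_ge
    (hgz ▸ hE.line_le_of_hasDerivWithinAt hxab hzab hm)
  intro y hy
  have hyab : y ∈ Icc a b := ⟨hx.1.trans hy.1, hy.2.trans hqb⟩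
  refine le_antisymm ?_ (hE.line_le_of_hasDerivWithinAt hxab hyab hm)
  exact hE.le_line_of_mem_Icc hxab hzab ⟨hy.1, hy.2.trans hqz⟩ (by simp) hEz

variable {m : ℝ → ℝ} {p q : ℝ}

lemma convEnv_eqOn_line_of_lt (hg : ContinuousOn g (Icc a b))
    (hm : ∀ u ∈ Icc a b, HasDerivWithinAt (convEnv a b g) (m u) (Icc a b) u)
    (hap : a ≤ p) (hpq : p < q) (hqb : q ≤ b) (hlt : ∀ y ∈ Ioo p q, convEnv a b g y < g y) :
    ∀ y ∈ Icc p q, convEnv a b g y = convEnv a b g q + m q * (y - q) := by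
  set E := convEnv a b g
  have hsub : Icc p q ⊆ Icc a b := Icc_subset_Icc hap hqb
  have htan : ∀ x ∈ Ioo p q, ∀ y ∈ Icc x q, E y = E x + m x * (y - x) := fun x hx =>
    convEnv_eq_tangent_of_lt hg ⟨hap.trans hx.1.le, hx.2.trans_le hqb⟩
      (hm x (hsub (Ioo_subset_Icc_self hx))) hqb fun y hy => hlt y ⟨hx.1.trans_le hy.1, hy.2⟩
  have hEq : EqOn E (fun y => E q + m q * (y - q)) (Ioc p q) := by
    intro y hy
    rcases hy.2.eq_or_lt with rfl | hyq
    · simp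
    have hmy : m q = m y := (hm q (hsub (right_mem_Icc.2 hpq.le))).eq_of_eqOn_Icc
      (hasDerivAt_line _ _ _ _).hasDerivWithinAt hyq (right_mem_Icc.2 hyq.le)
      ((Icc_subset_Icc_left hy.1.le).trans hsub) (subset_univ _)
      fun z hz => htan y ⟨hy.1, hyq⟩ z hz
    have := htan y ⟨hy.1, hyq⟩ q (right_mem_Icc.2 hyq.le)
    rw [hmy]
    linarith
  exact hEq.of_subset_closure (fun y hy => (hm y (hsub hy)).continuousWithinAt.mono hsub)
    (by fun_prop) Ioc_subset_Icc_self (by rw [closure_Ioc hpq.ne])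

lemma hasDerivWithinAt_convEnv_const_of_lt (hg : ContinuousOn g (Icc a b))
    (hm : ∀ u ∈ Icc a b, HasDerivWithinAt (convEnv a b g) (m u) (Icc a b) u)
    (hap : a ≤ p) (hpq : p ≤ q) (hqb : q ≤ b) (hlt : ∀ y ∈ Ioo p q, convEnv a b g y < g y) :
    ∀ y ∈ Icc p q, m y = m q := by
  rcases hpq.eq_or_lt with rfl | hpq
  · intro y hy
    rw [Icc_self, mem_singleton_iff] at hy
    rw [hy]
  have hsub : Icc p q ⊆ Icc a b := Icc_subset_Icc hap hqb
  exact fun y hy => (hm y (hsub hy)).eq_of_eqOn_Icc (hasDerivAt_line _ _ _ _).hasDerivWithinAt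
    hpq hy hsub (subset_univ _) fun z hz => convEnv_eqOn_line_of_lt hg hm hap hpq hqb hlt z hz

lemma convEnv_eq_convEnv_of_contact (hg : ContinuousOn g (Icc a b))
    (hm : ∀ u ∈ Icc a b, HasDerivWithinAt (convEnv a b g) (m u) (Icc a b) u) {a' w : ℝ}
    (haa' : a ≤ a') (hw : w ∈ Icc a' b) (hwg : convEnv a b g w = g w) :
    ∀ x ∈ Icc w b, convEnv a' b g x = convEnv a b g x := by
  have hEc : ContinuousOn (convEnv a b g) (Icc a b) := fun u hu => (hm u hu).continuousWithinAt
  have hsub : Icc a' b ⊆ Icc a b := Icc_subset_Icc_left haa'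
  have hg' : ContinuousOn g (Icc a' b) := hg.mono hsub
  intro x hx
  have hxab : x ∈ Icc a' b := ⟨hw.1.trans hx.1, hx.2⟩
  refine le_antisymm ?_ (convEnv_le_convEnv hg hsub hxab)
  by_cases hxg : convEnv a b g x = g x
  · exact hxg ▸ convEnv_le hg' hxab
  have hwx : Icc w x ⊆ Icc a b := Icc_subset_Icc (haa'.trans hw.1) hx.2
  have hxb : Icc x b ⊆ Icc a b := Icc_subset_Icc_left (haa'.trans hxab.1)
  obtain ⟨p, ⟨⟨hwp, hpx⟩, hpg⟩, hp_max⟩ :=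
    (isCompact_Icc_sep_eq (hEc.mono hwx) (hg.mono hwx)).exists_isGreatest
      ⟨w, left_mem_Icc.2 hx.1, hwg⟩
  obtain ⟨q, ⟨⟨hxq, hqb⟩, hqg⟩, hq_min⟩ :=
    (isCompact_Icc_sep_eq (hEc.mono hxb) (hg.mono hxb)).exists_isLeast
      ⟨b, right_mem_Icc.2 hx.2, convEnv_right_eq (haa'.trans hxab.1 |>.trans hx.2) hg⟩
  have hpx' : p < x := hpx.lt_of_ne (by rintro rfl; exact hxg hpg)
  have hxq' : x < q := hxq.lt_of_ne (by rintro rfl; exact hxg hqg)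
  have hp : p ∈ Icc a' b := ⟨hw.1.trans hwp, hpx.trans hx.2⟩
  have hq : q ∈ Icc a' b := ⟨hxab.1.trans hxq, hqb⟩
  have hlt : ∀ y ∈ Ioo p q, convEnv a b g y < g y := by
    intro y hy
    refine (convEnv_le hg (hsub ⟨hp.1.trans hy.1.le, hy.2.le.trans hqb⟩)).lt_of_ne fun hyg => ?_
    rcases le_total y x with hyx | hxy
    · exact (hp_max ⟨⟨hwp.trans hy.1.le, hyx⟩, hyg⟩).not_gt hy.1
    · exact (hq_min ⟨⟨hxy, hy.2.le.trans hqb⟩, hyg⟩).not_gt hy.2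
  have hline := convEnv_eqOn_line_of_lt hg hm (haa'.trans hp.1) (hpx'.trans hxq') hqb hlt
  rw [hline x ⟨hpx'.le, hxq'.le⟩]
  refine (convexOn_convEnv hg').le_line_of_mem_Icc hp hq ⟨hpx'.le, hxq'.le⟩ ?_ ?_
  · rw [← hline p (left_mem_Icc.2 (hpx'.trans hxq').le), hpg]
    exact convEnv_le hg' hp
  · rw [← hline q (right_mem_Icc.2 (hpx'.trans hxq').le), hqg]
    exact convEnv_le hg' hq

end ConvexEnvelope

theorem stmt5 (g : ℝ → ℝ) (hg : ContDiff ℝ 1 g) (a ubar b : ℝ)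
    (h1 : a < ubar) (h2 : ubar < b) (m₁ m₂ : ℝ → ℝ)
    (hm₁ : ∀ u ∈ Set.Icc ubar b,
      HasDerivWithinAt (convEnv ubar b g) (m₁ u) (Set.Icc ubar b) u)
    (hm₂ : ∀ u ∈ Set.Icc a b,
      HasDerivWithinAt (convEnv a b g) (m₂ u) (Set.Icc a b) u) :
    ∀ u₁ ∈ Set.Icc ubar b, ∀ u₂ ∈ Set.Icc ubar b, u₁ < u₂ →
      m₂ u₂ - m₂ u₁ ≤ m₁ u₂ - m₁ u₁ := by
  have hg' : ContinuousOn g (Icc a b) := hg.continuous.continuousOn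
  have hsub : Icc ubar b ⊆ Icc a b := Icc_subset_Icc_left h1.le
  obtain ⟨w, ⟨hw, hwg⟩, hw_min⟩ := (isCompact_Icc_sep_eq
    (fun u hu => (hm₂ u (hsub hu)).continuousWithinAt.mono hsub) (hg'.mono hsub)).exists_isLeast
    ⟨b, right_mem_Icc.2 h2.le, convEnv_right_eq (h1.trans h2).le hg'⟩
  have hm₂_const : ∀ u ∈ Icc ubar w, m₂ u = m₂ w :=
    hasDerivWithinAt_convEnv_const_of_lt hg' hm₂ h1.le hw.1 hw.2 fun y hy =>
      (convEnv_le hg' (hsub ⟨hy.1.le, hy.2.le.trans hw.2⟩)).lt_of_ne fun hyg =>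
        (hw_min ⟨⟨hy.1.le, hy.2.le.trans hw.2⟩, hyg⟩).not_gt hy.2
  have hm_eq : ∀ u ∈ Icc w b, w < b → m₁ u = m₂ u := fun u hu hwb =>
    (hm₁ u ⟨hw.1.trans hu.1, hu.2⟩).eq_of_eqOn_Icc (hm₂ u (hsub ⟨hw.1.trans hu.1, hu.2⟩)) hwb hu
      (Icc_subset_Icc_left hw.1) ((Icc_subset_Icc_left hw.1).trans hsub)
      fun x hx => convEnv_eq_convEnv_of_contact hg' hm₂ h1.le hw hwg x hx
  have hm₁_mono := (convexOn_convEnv (hg'.mono hsub)).monotoneOn_of_hasDerivWithinAt hm₁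
  intro u₁ hu₁ u₂ hu₂ h12
  rcases le_or_gt u₂ w with hu₂w | hwu₂
  · rw [hm₂_const u₂ ⟨hu₂.1, hu₂w⟩, hm₂_const u₁ ⟨hu₁.1, h12.le.trans hu₂w⟩]
    linarith [hm₁_mono hu₁ hu₂ h12.le]
  have hwb : w < b := hwu₂.trans_le hu₂.2
  have hm₁_le : m₁ u₁ ≤ m₂ u₁ := by
    rcases le_total w u₁ with hwu₁ | hu₁w
    · exact (hm_eq u₁ ⟨hwu₁, hu₁.2⟩ hwb).le
    calc m₁ u₁ ≤ m₁ w := hm₁_mono hu₁ hw hu₁w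
      _ = m₂ w := hm_eq w (left_mem_Icc.2 hwb.le) hwb
      _ = m₂ u₁ := (hm₂_const u₁ ⟨hu₁.1, hu₁w⟩).symm
  linarith [hm_eq u₂ ⟨hwu₂.le, hu₂.2⟩ hwb]
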